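/- Let q ≥ 2. Then ẑ^q := â^q/‖â^q‖ lies in M̃_≤^{q−1}, has unit norm, and satisfies ⟨ẑ^q, z_k^q⟩ = (1/‖â^q‖)·√(3/(q+1)) for every 1 ≤ k ≤ q−1. Moreover, ẑ^q is the unique maximizer of the function z ↦ min_{1≤k≤q−1} ⟨z, z_k^q⟩ over the set of unit vectors z ∈ M̃_≤^{q−1}: for every unit vector z ∈ M̃_≤^{q−1} with z ≠ ẑ^q, min_{1≤k≤q−1} ⟨z, z_k^q⟩ < (1/‖â^q‖)·√(3/(q+1)). -/

import Mathlib

open MeasureTheory Filter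

/-- The unit vector `z_k^q ∈ ℝ^q` whose first `k` coordinates equal `-√((q-k)/(qk))` and whose
last `q-k` coordinates equal `√(k/(q(q-k)))`. -/
noncomputable def zvec (q k : ℕ) : EuclideanSpace ℝ (Fin q) := WithLp.toLp 2 (fun i : Fin q =>
  if (i : ℕ) < k then -Real.sqrt (((q : ℝ) - k) / (q * k))
  else Real.sqrt ((k : ℝ) / (q * ((q : ℝ) - k))))

/-- `b_k^q = √(3k(q-k)/(q(q+1)))`. -/
noncomputable def bcoef (q k : ℕ) : ℝ :=
  Real.sqrt (3 * k * ((q : ℝ) - k) / (q * ((q : ℝ) + 1)))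

/-- The vector `â^q ∈ ℝ^q` with `â_k^q = b_{k-1}^q - b_k^q`, `k = 1,…,q`. -/
noncomputable def ahat (q : ℕ) : EuclideanSpace ℝ (Fin q) := WithLp.toLp 2 (fun i : Fin q =>
  bcoef q (i : ℕ) - bcoef q ((i : ℕ) + 1))

namespace S10Aux
open Finset

lemma bcoef_zero (q : ℕ) : bcoef q 0 = 0 := by simp [bcoef]
lemma bcoef_self (q : ℕ) : bcoef q q = 0 := by simp [bcoef]
lemma bcoef_nonneg (q k : ℕ) : 0 ≤ bcoef q k := Real.sqrt_nonneg _

lemma le_of_sq_le_sq (a b : ℝ) (ha : 0 ≤ a) (hb : 0 ≤ b) (h : a^2 ≤ b^2) : a ≤ b := by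
  nlinarith

lemma bcoef_concave (q k : ℕ) (hk : k + 2 ≤ q) :
    bcoef q k + bcoef q (k+2) ≤ 2 * bcoef q (k+1) := by
  have hq : (0:ℝ) < q := by
    have : 0 < q := by omega
    exact_mod_cast this
  set D : ℝ := (q:ℝ) * ((q:ℝ) + 1) with hD
  have hDpos : 0 < D := by positivity
  set A : ℝ := 3 * k * ((q:ℝ) - k) with hA
  set B : ℝ := 3 * (k+2) * ((q:ℝ) - (k+2)) with hB
  set M : ℝ := 3 * (k+1) * ((q:ℝ) - (k+1)) with hM
  have hkq : (k:ℝ) + 2 ≤ q := by exact_mod_cast hk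
  have hAn : 0 ≤ A := by
    have : (0:ℝ) ≤ (q:ℝ) - k := by linarith
    positivity
  have hBn : 0 ≤ B := by
    have : (0:ℝ) ≤ (q:ℝ) - (k+2) := by linarith
    positivity
  have hMn : 0 ≤ M := by
    have : (0:ℝ) ≤ (q:ℝ) - (k+1) := by linarith
    positivity
  have hAB : A * B ≤ M^2 := by
    nlinarith [sq_nonneg ((q:ℝ) - 2*k - 2),
      mul_nonneg (Nat.cast_nonneg (α := ℝ) k) (show (0:ℝ) ≤ (q:ℝ) - k by linarith)]
  have hsum : A + B = 2 * M - 6 := by ring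
  have e1 : bcoef q k = Real.sqrt (A / D) := by rw [bcoef]
  have e2 : bcoef q (k+2) = Real.sqrt (B / D) := by rw [bcoef, hB, hD]; push_cast; ring_nf
  have e3 : bcoef q (k+1) = Real.sqrt (M / D) := by rw [bcoef, hM, hD]; push_cast; ring_nf
  rw [e1, e2, e3]
  have hADn : 0 ≤ A / D := by positivity
  have hBDn : 0 ≤ B / D := by positivity
  have hMDn : 0 ≤ M / D := by positivity
  have h1 : Real.sqrt (A/D) * Real.sqrt (B/D) ≤ M / D := by
    rw [← Real.sqrt_mul hADn]
    calc Real.sqrt (A/D * (B/D)) ≤ Real.sqrt ((M/D)^2) := by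
          apply Real.sqrt_le_sqrt
          rw [div_mul_div_comm, div_pow]
          exact div_le_div_of_nonneg_right hAB (by positivity) |>.trans_eq (by ring_nf)
      _ = M / D := Real.sqrt_sq hMDn
  have q1 := Real.sq_sqrt hADn
  have q2 := Real.sq_sqrt hBDn
  have q3 := Real.sq_sqrt hMDn
  have hABD : A / D + B / D ≤ 2 * (M / D) := by
    rw [← add_div]
    calc (A+B)/D ≤ (2*M)/D := by gcongr; linarith
      _ = 2*(M/D) := by ring
  apply le_of_sq_le_sq _ _ (by positivity) (by positivity)
  nlinarith [Real.sqrt_nonneg (A/D), Real.sqrt_nonneg (B/D)]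

/-- increments are monotone -/
lemma acoef_mono (q : ℕ) : ∀ j i : ℕ, i ≤ j → j + 1 ≤ q →
    bcoef q i - bcoef q (i+1) ≤ bcoef q j - bcoef q (j+1) := by
  intro j
  induction j with
  | zero => intro i hi _; interval_cases i; rfl
  | succ j ih =>
    intro i hi hj
    rcases Nat.lt_or_ge i (j+1) with h | h
    · have h1 := ih i (by omega) (by omega)
      have h2 := bcoef_concave q j (by omega)
      have h3 : bcoef q j - bcoef q (j+1) ≤ bcoef q (j+1) - bcoef q (j+2) := by linarith
      exact h1.trans h3
    · have : i = j + 1 := by omega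
      rw [this]

lemma bcoef_one_pos (q : ℕ) (hq : 2 ≤ q) : 0 < bcoef q 1 := by
  have hq' : (2:ℝ) ≤ q := by exact_mod_cast hq
  apply Real.sqrt_pos.2
  push_cast
  have h1 : (0:ℝ) < (q:ℝ) - 1 := by linarith
  have h2 : (0:ℝ) < (q:ℝ) * ((q:ℝ)+1) := by nlinarith
  positivity

lemma sum_acoef (q m : ℕ) :
    ∑ n ∈ Finset.range m, (bcoef q n - bcoef q (n+1)) = - bcoef q m := by
  rw [Finset.sum_range_sub' (f := bcoef q) m]
  simp [bcoef]

lemma sum_acoef_Ico (q k : ℕ) (hk : k ≤ q) :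
    ∑ n ∈ Finset.Ico k q, (bcoef q n - bcoef q (n+1)) = bcoef q k := by
  rw [Finset.sum_Ico_eq_sub _ hk, sum_acoef, sum_acoef, bcoef_self]
  ring

/-- key scalar computation -/
lemma bk_mul (q k : ℕ) (hq : 2 ≤ q) (hk1 : 1 ≤ k) (hkq : k ≤ q - 1) :
    bcoef q k * (Real.sqrt (((q:ℝ)-k)/(q*k)) + Real.sqrt ((k:ℝ)/(q*((q:ℝ)-k))))
      = Real.sqrt (3 / ((q:ℝ) + 1)) := by
  have hq' : (2:ℝ) ≤ q := by exact_mod_cast hq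
  have hK1 : (1:ℝ) ≤ k := by exact_mod_cast hk1
  have hKQ : (k:ℝ) ≤ (q:ℝ) - 1 := by
    have : (k:ℝ) ≤ ((q-1 : ℕ) : ℝ) := by exact_mod_cast hkq
    rwa [Nat.cast_sub (by omega), Nat.cast_one] at this
  have hQ0 : (0:ℝ) < q := by linarith
  have hK0 : (0:ℝ) < k := by linarith
  have hQK : (0:ℝ) < (q:ℝ) - k := by linarith
  have hQ1 : (0:ℝ) < (q:ℝ) + 1 := by linarith
  have hb : (0:ℝ) ≤ 3 * k * ((q:ℝ) - k) / (q * ((q:ℝ)+1)) := by positivity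
  have e1 : bcoef q k * Real.sqrt (((q:ℝ)-k)/(q*k))
      = (((q:ℝ)-k)/q) * Real.sqrt (3 / ((q:ℝ) + 1)) := by
    rw [bcoef, ← Real.sqrt_mul hb]
    have e : 3 * (k:ℝ) * ((q:ℝ) - k) / (q * ((q:ℝ)+1)) * ((((q:ℝ)-k))/(q*k))
        = (((q:ℝ)-k)/q)^2 * (3 / ((q:ℝ)+1)) := by
      field_simp
    rw [e, Real.sqrt_mul (sq_nonneg _), Real.sqrt_sq (by positivity)]
  have e2 : bcoef q k * Real.sqrt ((k:ℝ)/(q*((q:ℝ)-k)))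
      = ((k:ℝ)/q) * Real.sqrt (3 / ((q:ℝ) + 1)) := by
    rw [bcoef, ← Real.sqrt_mul hb]
    have e : 3 * (k:ℝ) * ((q:ℝ) - k) / (q * ((q:ℝ)+1)) * ((k:ℝ)/(q*((q:ℝ)-k)))
        = ((k:ℝ)/q)^2 * (3 / ((q:ℝ)+1)) := by
      field_simp
    rw [e, Real.sqrt_mul (sq_nonneg _), Real.sqrt_sq (by positivity)]
  rw [mul_add, e1, e2, ← add_mul]
  have e : ((q:ℝ)-k)/q + (k:ℝ)/q = 1 := by field_simp; ring
  rw [e, one_mul]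

lemma beta_pos (q k : ℕ) (hq : 2 ≤ q) (hk1 : 1 ≤ k) (hkq : k ≤ q - 1) :
    0 < Real.sqrt ((k:ℝ)/(q*((q:ℝ)-k))) := by
  have hq' : (2:ℝ) ≤ q := by exact_mod_cast hq
  have hK1 : (1:ℝ) ≤ k := by exact_mod_cast hk1
  have hKQ : (k:ℝ) ≤ (q:ℝ) - 1 := by
    have : (k:ℝ) ≤ ((q-1 : ℕ) : ℝ) := by exact_mod_cast hkq
    rwa [Nat.cast_sub (by omega), Nat.cast_one] at this
  have hQ0 : (0:ℝ) < q := by linarith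
  have hK0 : (0:ℝ) < k := by linarith
  have hQK : (0:ℝ) < (q:ℝ) - k := by linarith
  apply Real.sqrt_pos.2
  positivity

/-- split the inner product with zvec -/
lemma split_sum (q k : ℕ) (hk : k ≤ q) (v : EuclideanSpace ℝ (Fin q)) (vf : ℕ → ℝ)
    (hvf : ∀ i : Fin q, vf i = v i) :
    ∑ i, v i * zvec q k i =
      (∑ n ∈ range k, vf n) * (-Real.sqrt (((q:ℝ)-k)/(q*k)))
      + (∑ n ∈ Finset.Ico k q, vf n) * Real.sqrt ((k:ℝ)/(q*((q:ℝ)-k))) := by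
  have step : ∑ i, v i * zvec q k i
      = ∑ n ∈ range q, vf n * (if n < k then -Real.sqrt (((q:ℝ)-k)/(q*k))
          else Real.sqrt ((k:ℝ)/(q*((q:ℝ)-k)))) := by
    rw [← Fin.sum_univ_eq_sum_range]
    apply Finset.sum_congr rfl
    intro i _
    rw [hvf i]
    rfl
  rw [step, range_eq_Ico, ← Finset.sum_Ico_consecutive _ (Nat.zero_le k) hk,
    ← range_eq_Ico]
  congr 1
  · rw [Finset.sum_mul]
    apply Finset.sum_congr rfl
    intro n hn
    rw [if_pos (Finset.mem_range.1 hn)]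
  · rw [Finset.sum_mul]
    apply Finset.sum_congr rfl
    intro n hn
    rw [if_neg (by simpa using (Finset.mem_Ico.1 hn).1.not_gt)]

lemma inner_euclidean (q : ℕ) (x y : EuclideanSpace ℝ (Fin q)) :
    (inner ℝ x y : ℝ) = ∑ i, x i * y i := by
  simp [PiLp.inner_apply, RCLike.inner_apply, mul_comm]

lemma ahat_norm_pos (q : ℕ) (hq : 2 ≤ q) : 0 < ‖ahat q‖ := by
  rw [norm_pos_iff]
  intro h
  have h0 : ahat q ⟨0, by omega⟩ = 0 := by rw [h]; rfl
  have : bcoef q 0 - bcoef q 1 = 0 := h0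
  rw [bcoef_zero] at this
  have := bcoef_one_pos q hq
  linarith

/-- inner product of ahat with zvec -/
lemma ahat_inner (q k : ℕ) (hq : 2 ≤ q) (hk1 : 1 ≤ k) (hkq : k ≤ q - 1) :
    ∑ i, ahat q i * zvec q k i = Real.sqrt (3 / ((q:ℝ) + 1)) := by
  rw [split_sum q k (by omega) (ahat q) (fun n => bcoef q n - bcoef q (n+1))
    (fun i => rfl), sum_acoef, sum_acoef_Ico q k (by omega)]
  rw [← bk_mul q k hq hk1 hkq]
  ring

end S10Aux


open S10Aux Finset in
/-- Proposition 4.1: `ẑ^q = â^q/‖â^q‖` lies in `M̃_≤^{q-1}`, has unit norm, satisfies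
`⟨ẑ^q, z_k^q⟩ = (1/‖â^q‖)√(3/(q+1))` for all `1 ≤ k ≤ q-1`, and is the unique maximizer of
`z ↦ min_{1≤k≤q-1} ⟨z, z_k^q⟩` over unit vectors `z ∈ M̃_≤^{q-1}`. -/
theorem stmt10 (q : ℕ) (hq : 2 ≤ q) :
    (∀ i j : Fin q, i ≤ j → (‖ahat q‖⁻¹ • ahat q) i ≤ (‖ahat q‖⁻¹ • ahat q) j) ∧
    (∑ i, (‖ahat q‖⁻¹ • ahat q) i = 0) ∧
    ‖(‖ahat q‖⁻¹ • ahat q)‖ = 1 ∧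
    (∀ k : ℕ, 1 ≤ k → k ≤ q - 1 →
      ∑ i, (‖ahat q‖⁻¹ • ahat q) i * zvec q k i =
        (1 / ‖ahat q‖) * Real.sqrt (3 / ((q : ℝ) + 1))) ∧
    (∀ z : EuclideanSpace ℝ (Fin q), ‖z‖ = 1 → (∀ i j : Fin q, i ≤ j → z i ≤ z j) →
      (∑ i, z i = 0) → z ≠ ‖ahat q‖⁻¹ • ahat q →
      (⨅ k : Fin (q - 1), ∑ i, z i * zvec q ((k : ℕ) + 1) i) <
        (1 / ‖ahat q‖) * Real.sqrt (3 / ((q : ℝ) + 1))) := by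
  have hnorm := ahat_norm_pos q hq
  have hnorm' : ‖ahat q‖ ≠ 0 := ne_of_gt hnorm
  have hsmul : ∀ (c : ℝ) (x : EuclideanSpace ℝ (Fin q)) (i : Fin q),
      (c • x) i = c * x i := fun c x i => rfl
  refine ⟨?_, ?_, ?_, ?_, ?_⟩
  · -- monotone
    intro i j hij
    rw [hsmul, hsmul]
    apply mul_le_mul_of_nonneg_left _ (by positivity)
    exact acoef_mono q j i hij j.isLt
  · -- sum zero
    have : ∑ i, (‖ahat q‖⁻¹ • ahat q) i = ‖ahat q‖⁻¹ * ∑ i, ahat q i := by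
      rw [Finset.mul_sum]; exact Finset.sum_congr rfl fun i _ => rfl
    rw [this]
    have : ∑ i, ahat q i = 0 := by
      have h := Fin.sum_univ_eq_sum_range (fun n => bcoef q n - bcoef q (n+1)) q
      rw [sum_acoef, bcoef_self, neg_zero] at h
      exact h
    rw [this, mul_zero]
  · -- norm one
    rw [norm_smul, norm_inv, norm_norm, inv_mul_cancel₀ hnorm']
  · -- inner products
    intro k hk1 hkq
    have : ∑ i, (‖ahat q‖⁻¹ • ahat q) i * zvec q k i
        = ‖ahat q‖⁻¹ * ∑ i, ahat q i * zvec q k i := by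
      rw [Finset.mul_sum]
      exact Finset.sum_congr rfl fun i _ => by rw [hsmul]; ring
    rw [this, ahat_inner q k hq hk1 hkq, one_div]
  · -- uniqueness
    intro z hz1 hzmono hzsum hzne
    by_contra hcon
    push_neg at hcon
    set c := (1 / ‖ahat q‖) * Real.sqrt (3 / ((q : ℝ) + 1)) with hc
    -- every constraint holds with ≥ c
    have hge : ∀ k : ℕ, 1 ≤ k → k ≤ q - 1 → c ≤ ∑ i, z i * zvec q k i := by
      intro k hk1 hkq
      have hklt : k - 1 < q - 1 := by omega
      have := ciInf_le (Set.Finite.bddBelow (Set.finite_range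
        (fun k : Fin (q-1) => ∑ i, z i * zvec q ((k : ℕ) + 1) i))) (⟨k-1, hklt⟩ : Fin (q-1))
      have hk' : (k - 1) + 1 = k := by omega
      rw [hk'] at this
      exact le_trans hcon this
    -- partial sums of z
    set zf : ℕ → ℝ := fun n => if h : n < q then z ⟨n, h⟩ else 0 with hzf
    have hzfv : ∀ i : Fin q, zf i = z i := fun i => dif_pos i.isLt
    set af : ℕ → ℝ := fun n => bcoef q n - bcoef q (n+1) with haf
    have hafv : ∀ i : Fin q, af i = ahat q i := fun i => rfl
    have hzfsum : ∑ n ∈ range q, zf n = 0 := by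
      rw [← Fin.sum_univ_eq_sum_range]
      rw [Finset.sum_congr rfl fun i _ => hzfv i]
      exact hzsum
    -- step 1 : partial sums bounded
    have hS : ∀ k : ℕ, 1 ≤ k → k ≤ q - 1 →
        ∑ n ∈ range k, zf n ≤ -(‖ahat q‖⁻¹ * bcoef q k) := by
      intro k hk1 hkq
      have hsplit := split_sum q k (by omega) z zf hzfv
      have hIco : ∑ n ∈ Finset.Ico k q, zf n = - ∑ n ∈ range k, zf n := by
        rw [Finset.sum_Ico_eq_sub _ (by omega : k ≤ q), hzfsum]
        ring
      have h := hge k hk1 hkq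
      rw [hsplit, hIco] at h
      set S := ∑ n ∈ range k, zf n
      set α := Real.sqrt (((q:ℝ)-k)/(q*k))
      set β := Real.sqrt ((k:ℝ)/(q*((q:ℝ)-k)))
      have hαβ : 0 < α + β := by
        have := beta_pos q k hq hk1 hkq
        have := Real.sqrt_nonneg (((q:ℝ)-k)/(q*k))
        linarith
      have hcval : c = ‖ahat q‖⁻¹ * (bcoef q k * (α + β)) := by
        rw [hc, bk_mul q k hq hk1 hkq, one_div]
      rw [hcval] at h
      -- h : ‖ahat q‖⁻¹ * (bcoef q k * (α+β)) ≤ S * (-α) + (-S) * β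
      have : ‖ahat q‖⁻¹ * bcoef q k * (α + β) ≤ (-S) * (α + β) := by nlinarith
      nlinarith
    -- step 2 : Abel summation
    set w : ℕ → ℝ := fun n => zf n - ‖ahat q‖⁻¹ * af n with hw
    have hwsum : ∀ m : ℕ, ∑ n ∈ range m, w n
        = (∑ n ∈ range m, zf n) + ‖ahat q‖⁻¹ * bcoef q m := by
      intro m
      rw [hw]
      rw [Finset.sum_sub_distrib, ← Finset.mul_sum, sum_acoef]
      ring
    have habel := Finset.sum_range_by_parts (M := ℝ) af w q
    have hterm : ∀ n ∈ range (q-1), 0 ≤ (af (n+1) - af n) • (∑ j ∈ range (n+1), w j) →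
        True := fun _ _ _ => trivial
    have hsum_w_q : ∑ n ∈ range q, w n = 0 := by
      rw [hwsum, hzfsum, bcoef_self]; ring
    have hsum_terms : ∑ n ∈ range (q-1), (af (n+1) - af n) • (∑ j ∈ range (n+1), w j) ≤ 0 := by
      apply Finset.sum_nonpos
      intro n hn
      have hn' : n < q - 1 := Finset.mem_range.1 hn
      have h1 : 0 ≤ af (n+1) - af n := by
        have := acoef_mono q (n+1) n (by omega) (by omega)
        simpa [haf] using sub_nonneg.2 this
      have h2 : ∑ j ∈ range (n+1), w j ≤ 0 := by
        rw [hwsum]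
        have := hS (n+1) (by omega) (by omega)
        linarith
      rw [smul_eq_mul]
      exact mul_nonpos_of_nonneg_of_nonpos h1 h2
    have hpos : 0 ≤ ∑ n ∈ range q, af n • w n := by
      rw [habel, hsum_w_q, smul_zero, zero_sub]
      linarith
    -- step 3 : conclude inner product ≥ ‖ahat‖
    have hafsq : ∑ n ∈ range q, af n * af n = ‖ahat q‖^2 := by
      rw [← Fin.sum_univ_eq_sum_range (fun n => af n * af n) q]
      rw [show (∑ i : Fin q, af i * af i) = ∑ i, ahat q i * ahat q i from
        Finset.sum_congr rfl fun i _ => by rw [hafv]]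
      rw [← inner_euclidean, real_inner_self_eq_norm_sq]
    have hinner_z : (inner ℝ (ahat q) z : ℝ) = ∑ n ∈ range q, af n * zf n := by
      rw [inner_euclidean, ← Fin.sum_univ_eq_sum_range (fun n => af n * zf n) q]
      exact Finset.sum_congr rfl fun i _ => by rw [hafv, hzfv]
    have hexpand : ∑ n ∈ range q, af n • w n
        = (∑ n ∈ range q, af n * zf n) - ‖ahat q‖⁻¹ * ∑ n ∈ range q, af n * af n := by
      rw [Finset.mul_sum, ← Finset.sum_sub_distrib]
      exact Finset.sum_congr rfl fun n _ => by rw [hw, smul_eq_mul]; ring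
    have hfinal : ‖ahat q‖ ≤ (inner ℝ (ahat q) z : ℝ) := by
      have h2 : 0 ≤ (∑ n ∈ range q, af n * zf n)
          - ‖ahat q‖⁻¹ * ∑ n ∈ range q, af n * af n := by
        rw [← hexpand]; exact hpos
      have h3 : ‖ahat q‖⁻¹ * ∑ n ∈ range q, af n * af n = ‖ahat q‖ := by
        rw [hafsq, sq]
        field_simp
      rw [hinner_z]
      linarith
    -- Cauchy-Schwarz equality
    have hCS : (inner ℝ (ahat q) z : ℝ) ≤ ‖ahat q‖ * ‖z‖ := real_inner_le_norm _ _
    rw [hz1, mul_one] at hCS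
    have heq : (inner ℝ (ahat q) z : ℝ) = ‖ahat q‖ * ‖z‖ := by
      rw [hz1, mul_one]; linarith
    have hpar := inner_eq_norm_mul_iff_real.1 heq
    rw [hz1, one_smul] at hpar
    -- hpar : ahat q = ‖ahat q‖ • z
    have hfin := congrArg (fun v : EuclideanSpace ℝ (Fin q) => ‖ahat q‖⁻¹ • v) hpar
    simp only [smul_smul, inv_mul_cancel₀ hnorm', one_smul] at hfin
    exact hzne hfin.symm
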